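/- Let H = p₁² + p₂² + a·q₁^(-2) + b·q₂^(-2/5) on q₁ > 0, q₂ > 0, and let Y₆ = p₂⁴(p₁q₂ - p₂q₁)² + (a/q₁²)(q₂²p₂⁴ + (11b/3)q₂^(8/5)p₂² + (64b²/9)q₂^(6/5)) + b³q₁²·q₂^(-6/5) + (b²/9)(64p₁²q₂² - 90p₁p₂q₁q₂ + 27p₂²q₁²)·q₂^(-4/5) + (b/3)p₂²(11p₁q₂ - 9p₂q₁)(p₁q₂ - p₂q₁)·q₂^(-2/5). Then {H, Y₆} = 0. -/

import Mathlib

noncomputable def pb (F G : ℝ → ℝ → ℝ → ℝ → ℝ) (q1 q2 p1 p2 : ℝ) : ℝ :=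
  deriv (fun x => F x q2 p1 p2) q1 * deriv (fun x => G q1 q2 x p2) p1
  + deriv (fun x => F q1 x p1 p2) q2 * deriv (fun x => G q1 q2 p1 x) p2
  - deriv (fun x => F q1 q2 x p2) p1 * deriv (fun x => G x q2 p1 p2) q1
  - deriv (fun x => F q1 q2 p1 x) p2 * deriv (fun x => G q1 x p1 p2) q2

noncomputable def H (a b : ℝ) (q1 q2 p1 p2 : ℝ) : ℝ :=
  p1 ^ 2 + p2 ^ 2 + a * q1 ^ (-(2 : ℝ)) + b * q2 ^ (-(2 : ℝ) / 5)

noncomputable def Y6 (a b : ℝ) (q1 q2 p1 p2 : ℝ) : ℝ :=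
  p2 ^ 4 * (p1 * q2 - p2 * q1) ^ 2
  + (a / q1 ^ 2) * (q2 ^ 2 * p2 ^ 4 + (11 * b / 3) * q2 ^ ((8 : ℝ) / 5) * p2 ^ 2
      + (64 * b ^ 2 / 9) * q2 ^ ((6 : ℝ) / 5))
  + b ^ 3 * q1 ^ 2 * q2 ^ (-(6 : ℝ) / 5)
  + (b ^ 2 / 9) * (64 * p1 ^ 2 * q2 ^ 2 - 90 * p1 * p2 * q1 * q2 + 27 * p2 ^ 2 * q1 ^ 2)
      * q2 ^ (-(4 : ℝ) / 5)
  + (b / 3) * p2 ^ 2 * (11 * p1 * q2 - 9 * p2 * q1) * (p1 * q2 - p2 * q1)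
      * q2 ^ (-(2 : ℝ) / 5)

/-! The bracket is computed from the explicit partial derivatives of `H` and `Y6`, with each
derivative of `q₂ ^ c` written as `c * q₂ ^ c / q₂`, so that only the exponents occurring in `H`
and `Y6` themselves appear. Substituting `q₂ = s ^ 5` turns every `q₂ ^ (k / 5)` into `s ^ k`,
and the bracket becomes a rational function of `s`, `q₁`, `p₁`, `p₂` that vanishes identically. -/

theorem pb_eq_of_hasDerivAt {F G : ℝ → ℝ → ℝ → ℝ → ℝ}
    {q1 q2 p1 p2 Fq1 Fq2 Fp1 Fp2 Gq1 Gq2 Gp1 Gp2 : ℝ}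
    (hFq1 : HasDerivAt (fun x => F x q2 p1 p2) Fq1 q1)
    (hFq2 : HasDerivAt (fun x => F q1 x p1 p2) Fq2 q2)
    (hFp1 : HasDerivAt (fun x => F q1 q2 x p2) Fp1 p1)
    (hFp2 : HasDerivAt (fun x => F q1 q2 p1 x) Fp2 p2)
    (hGq1 : HasDerivAt (fun x => G x q2 p1 p2) Gq1 q1)
    (hGq2 : HasDerivAt (fun x => G q1 x p1 p2) Gq2 q2)
    (hGp1 : HasDerivAt (fun x => G q1 q2 x p2) Gp1 p1)
    (hGp2 : HasDerivAt (fun x => G q1 q2 p1 x) Gp2 p2) :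
    pb F G q1 q2 p1 p2 = Fq1 * Gp1 + Fq2 * Gp2 - Fp1 * Gq1 - Fp2 * Gq2 := by
  rw [pb, hFq1.deriv, hFq2.deriv, hFp1.deriv, hFp2.deriv, hGq1.deriv, hGq2.deriv, hGp1.deriv,
    hGp2.deriv]

theorem hasDerivAt_rpow_const_div {x : ℝ} (hx : x ≠ 0) (p : ℝ) :
    HasDerivAt (fun y => y ^ p) (p * x ^ p / x) x := by
  simpa [Real.rpow_sub_one hx, mul_div_assoc] using Real.hasDerivAt_rpow_const (p := p) (Or.inl hx)

theorem pow_five_rpow_eq_zpow {s : ℝ} (hs : 0 ≤ s) (c : ℝ) (n : ℤ) (h : c = n / 5) :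
    (s ^ 5) ^ c = s ^ n := by
  rw [← Real.rpow_natCast, ← Real.rpow_mul hs, h, Nat.cast_ofNat,
    mul_div_cancel₀ _ (by norm_num : (5 : ℝ) ≠ 0), Real.rpow_intCast]

section Derivatives

variable (a b : ℝ) {q1 q2 p1 p2 : ℝ}

-- In the proofs for `Y6`, `dₖ` is the derivative of its `k`-th summand.

theorem hasDerivAt_H_q1 (hq1 : q1 ≠ 0) :
    HasDerivAt (fun x => H a b x q2 p1 p2) (-2 * a * q1 ^ (-(2 : ℝ)) / q1) q1 := by
  have h := ((hasDerivAt_rpow_const_div hq1 (-(2 : ℝ))).const_mul a).const_add (p1 ^ 2 + p2 ^ 2)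
    |>.add_const (b * q2 ^ (-(2 : ℝ) / 5))
  exact h.congr_deriv (by ring)

theorem hasDerivAt_H_q2 (hq2 : q2 ≠ 0) :
    HasDerivAt (fun x => H a b q1 x p1 p2) (-(2 / 5) * b * q2 ^ (-(2 : ℝ) / 5) / q2) q2 := by
  have h := ((hasDerivAt_rpow_const_div hq2 (-(2 : ℝ) / 5)).const_mul b).const_add
    (p1 ^ 2 + p2 ^ 2 + a * q1 ^ (-(2 : ℝ)))
  exact h.congr_deriv (by ring)

theorem hasDerivAt_H_p1 : HasDerivAt (fun x => H a b q1 q2 x p2) (2 * p1) p1 := by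
  have h := (((hasDerivAt_pow 2 p1).add_const (p2 ^ 2)).add_const (a * q1 ^ (-(2 : ℝ)))).add_const
    (b * q2 ^ (-(2 : ℝ) / 5))
  exact h.congr_deriv (by ring)

theorem hasDerivAt_H_p2 : HasDerivAt (fun x => H a b q1 q2 p1 x) (2 * p2) p2 := by
  have h := (((hasDerivAt_pow 2 p2).const_add (p1 ^ 2)).add_const (a * q1 ^ (-(2 : ℝ)))).add_const
    (b * q2 ^ (-(2 : ℝ) / 5))
  exact h.congr_deriv (by ring)

theorem hasDerivAt_Y6_p1 :
    HasDerivAt (fun x => Y6 a b q1 q2 x p2)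
      (2 * q2 * p2 ^ 4 * (p1 * q2 - p2 * q1)
        + b ^ 2 / 9 * (128 * p1 * q2 ^ 2 - 90 * p2 * q1 * q2) * q2 ^ (-(4 : ℝ) / 5)
        + b / 3 * q2 * p2 ^ 2 * (22 * p1 * q2 - 20 * p2 * q1) * q2 ^ (-(2 : ℝ) / 5)) p1 := by
  have hL := ((hasDerivAt_id' p1).mul_const q2).sub_const (p2 * q1)
  have hA := (((hasDerivAt_id' p1).const_mul 11).mul_const q2).sub_const (9 * p2 * q1)
  have d1 := (hL.pow 2).const_mul (p2 ^ 4)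
  have d4 := ((((((hasDerivAt_pow 2 p1).const_mul 64).mul_const (q2 ^ 2)).sub
    ((((hasDerivAt_id' p1).const_mul 90).mul_const p2).mul_const q1 |>.mul_const q2)).add_const
    (27 * p2 ^ 2 * q1 ^ 2)).const_mul (b ^ 2 / 9)).mul_const (q2 ^ (-(4 : ℝ) / 5))
  have d5 := ((hA.const_mul (b / 3 * p2 ^ 2)).mul hL).mul_const (q2 ^ (-(2 : ℝ) / 5))
  unfold Y6
  refine ((((d1.add_const _).add_const _).add d4).add d5).congr_deriv ?_
  simp only [Nat.cast_ofNat, Nat.add_one_sub_one, pow_one, one_mul, mul_one]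
  ring

theorem hasDerivAt_Y6_p2 :
    HasDerivAt (fun x => Y6 a b q1 q2 p1 x)
      (4 * p2 ^ 3 * (p1 * q2 - p2 * q1) ^ 2 - 2 * q1 * p2 ^ 4 * (p1 * q2 - p2 * q1)
        + a / q1 ^ 2 * (4 * q2 ^ 2 * p2 ^ 3 + 22 * b / 3 * q2 ^ ((8 : ℝ) / 5) * p2)
        + b ^ 2 / 9 * (54 * p2 * q1 ^ 2 - 90 * p1 * q1 * q2) * q2 ^ (-(4 : ℝ) / 5)
        + b / 3 * p2 * (2 * (11 * p1 * q2 - 9 * p2 * q1) * (p1 * q2 - p2 * q1)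
            - 9 * q1 * p2 * (p1 * q2 - p2 * q1) - q1 * p2 * (11 * p1 * q2 - 9 * p2 * q1))
          * q2 ^ (-(2 : ℝ) / 5)) p2 := by
  have hL := ((hasDerivAt_id' p2).mul_const q1).const_sub (p1 * q2)
  have hA := (((hasDerivAt_id' p2).const_mul 9).mul_const q1).const_sub (11 * p1 * q2)
  have d1 := (hasDerivAt_pow 4 p2).mul (hL.pow 2)
  have d2 := ((((hasDerivAt_pow 4 p2).const_mul (q2 ^ 2)).add
    ((hasDerivAt_pow 2 p2).const_mul (11 * b / 3 * q2 ^ ((8 : ℝ) / 5)))).add_const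
    (64 * b ^ 2 / 9 * q2 ^ ((6 : ℝ) / 5))).const_mul (a / q1 ^ 2)
  have d4 := ((((((hasDerivAt_id' p2).const_mul (90 * p1)).mul_const q1).mul_const q2).const_sub
    (64 * p1 ^ 2 * q2 ^ 2)).add (((hasDerivAt_pow 2 p2).const_mul 27).mul_const (q1 ^ 2))
    |>.const_mul (b ^ 2 / 9)).mul_const (q2 ^ (-(4 : ℝ) / 5))
  have d5 := ((((hasDerivAt_pow 2 p2).const_mul (b / 3)).mul hA).mul hL).mul_const
    (q2 ^ (-(2 : ℝ) / 5))
  unfold Y6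
  refine ((((d1.add d2).add_const _).add d4).add d5).congr_deriv ?_
  simp only [Nat.cast_ofNat, Nat.add_one_sub_one, Pi.pow_apply, pow_one, one_mul, mul_neg, mul_one,
    Pi.mul_apply]
  ring

theorem hasDerivAt_Y6_q1 (hq1 : q1 ≠ 0) :
    HasDerivAt (fun x => Y6 a b x q2 p1 p2)
      (-2 * p2 ^ 5 * (p1 * q2 - p2 * q1)
        - 2 * a / q1 ^ 3 * (q2 ^ 2 * p2 ^ 4 + 11 * b / 3 * q2 ^ ((8 : ℝ) / 5) * p2 ^ 2
            + 64 * b ^ 2 / 9 * q2 ^ ((6 : ℝ) / 5))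
        + 2 * b ^ 3 * q1 * q2 ^ (-(6 : ℝ) / 5)
        + b ^ 2 / 9 * (54 * p2 ^ 2 * q1 - 90 * p1 * p2 * q2) * q2 ^ (-(4 : ℝ) / 5)
        - b / 3 * p2 ^ 3 * (20 * p1 * q2 - 18 * p2 * q1) * q2 ^ (-(2 : ℝ) / 5)) q1 := by
  have hL := ((hasDerivAt_id' q1).const_mul p2).const_sub (p1 * q2)
  have hA := ((hasDerivAt_id' q1).const_mul (9 * p2)).const_sub (11 * p1 * q2)
  have d1 := (hL.pow 2).const_mul (p2 ^ 4)
  have d2 := ((hasDerivAt_const q1 a).div (hasDerivAt_pow 2 q1) (pow_ne_zero 2 hq1)).mul_const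
    (q2 ^ 2 * p2 ^ 4 + 11 * b / 3 * q2 ^ ((8 : ℝ) / 5) * p2 ^ 2
      + 64 * b ^ 2 / 9 * q2 ^ ((6 : ℝ) / 5))
  have d3 := ((hasDerivAt_pow 2 q1).const_mul (b ^ 3)).mul_const (q2 ^ (-(6 : ℝ) / 5))
  have d4 := ((((((hasDerivAt_id' q1).const_mul (90 * p1 * p2)).mul_const q2).const_sub
    (64 * p1 ^ 2 * q2 ^ 2)).add ((hasDerivAt_pow 2 q1).const_mul (27 * p2 ^ 2))).const_mul
    (b ^ 2 / 9)).mul_const (q2 ^ (-(4 : ℝ) / 5))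
  have d5 := ((hA.const_mul (b / 3 * p2 ^ 2)).mul hL).mul_const (q2 ^ (-(2 : ℝ) / 5))
  unfold Y6
  refine ((((d1.add d2).add d3).add d4).add d5).congr_deriv ?_
  field_simp
  ring

theorem hasDerivAt_Y6_q2 (hq2 : q2 ≠ 0) :
    HasDerivAt (fun x => Y6 a b q1 x p1 p2)
      (2 * p1 * p2 ^ 4 * (p1 * q2 - p2 * q1)
        + a / q1 ^ 2 * (2 * q2 * p2 ^ 4 + 88 * b / 15 * q2 ^ ((8 : ℝ) / 5) / q2 * p2 ^ 2
            + 128 * b ^ 2 / 15 * q2 ^ ((6 : ℝ) / 5) / q2)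
        - 6 / 5 * b ^ 3 * q1 ^ 2 * q2 ^ (-(6 : ℝ) / 5) / q2
        + b ^ 2 / 9 * ((128 * p1 ^ 2 * q2 - 90 * p1 * p2 * q1) * q2 ^ (-(4 : ℝ) / 5)
            - 4 / 5 * (64 * p1 ^ 2 * q2 ^ 2 - 90 * p1 * p2 * q1 * q2 + 27 * p2 ^ 2 * q1 ^ 2)
              * q2 ^ (-(4 : ℝ) / 5) / q2)
        + b / 3 * p2 ^ 2 * (p1 * (22 * p1 * q2 - 20 * p2 * q1) * q2 ^ (-(2 : ℝ) / 5)
            - 2 / 5 * (11 * p1 * q2 - 9 * p2 * q1) * (p1 * q2 - p2 * q1)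
              * q2 ^ (-(2 : ℝ) / 5) / q2)) q2 := by
  have hL := ((hasDerivAt_id' q2).const_mul p1).sub_const (p2 * q1)
  have hA := ((hasDerivAt_id' q2).const_mul (11 * p1)).sub_const (9 * p2 * q1)
  have d1 := (hL.pow 2).const_mul (p2 ^ 4)
  have d2 := ((((hasDerivAt_pow 2 q2).mul_const (p2 ^ 4)).add
    (((hasDerivAt_rpow_const_div hq2 ((8 : ℝ) / 5)).const_mul (11 * b / 3)).mul_const
      (p2 ^ 2))).add
    ((hasDerivAt_rpow_const_div hq2 ((6 : ℝ) / 5)).const_mul (64 * b ^ 2 / 9))).const_mul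
    (a / q1 ^ 2)
  have d3 := (hasDerivAt_rpow_const_div hq2 (-(6 : ℝ) / 5)).const_mul (b ^ 3 * q1 ^ 2)
  have d4 := (((((hasDerivAt_pow 2 q2).const_mul (64 * p1 ^ 2)).sub
    ((hasDerivAt_id' q2).const_mul (90 * p1 * p2 * q1))).add_const
    (27 * p2 ^ 2 * q1 ^ 2)).const_mul (b ^ 2 / 9)).mul
    (hasDerivAt_rpow_const_div hq2 (-(4 : ℝ) / 5))
  have d5 := ((hA.const_mul (b / 3 * p2 ^ 2)).mul hL).mul
    (hasDerivAt_rpow_const_div hq2 (-(2 : ℝ) / 5))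
  unfold Y6
  refine ((((d1.add d2).add d3).add d4).add d5).congr_deriv ?_
  simp only [Nat.cast_ofNat, Nat.add_one_sub_one, pow_one, mul_one, Pi.sub_apply, Pi.mul_apply]
  ring

end Derivatives

theorem stmt9 (a b : ℝ) (q1 q2 p1 p2 : ℝ) (hq1 : 0 < q1) (hq2 : 0 < q2) :
    pb (H a b) (Y6 a b) q1 q2 p1 p2 = 0 := by
  rw [pb_eq_of_hasDerivAt (hasDerivAt_H_q1 a b hq1.ne') (hasDerivAt_H_q2 a b hq2.ne')
    (hasDerivAt_H_p1 a b) (hasDerivAt_H_p2 a b) (hasDerivAt_Y6_q1 a b hq1.ne')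
    (hasDerivAt_Y6_q2 a b hq2.ne') (hasDerivAt_Y6_p1 a b) (hasDerivAt_Y6_p2 a b)]
  obtain ⟨s, hs, rfl⟩ : ∃ s, 0 < s ∧ s ^ 5 = q2 :=
    ⟨q2 ^ (5⁻¹ : ℝ), by positivity, Real.rpow_inv_natCast_pow hq2.le (by norm_num)⟩
  rw [pow_five_rpow_eq_zpow hs.le (-(2 : ℝ) / 5) (-2) (by norm_num),
    pow_five_rpow_eq_zpow hs.le (-(4 : ℝ) / 5) (-4) (by norm_num),
    pow_five_rpow_eq_zpow hs.le (-(6 : ℝ) / 5) (-6) (by norm_num),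
    pow_five_rpow_eq_zpow hs.le ((6 : ℝ) / 5) 6 (by norm_num),
    pow_five_rpow_eq_zpow hs.le ((8 : ℝ) / 5) 8 (by norm_num),
    show -(2 : ℝ) = ((-2 : ℤ) : ℝ) by norm_num, Real.rpow_intCast]
  field_simp
  ring
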